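/- Let P be a continuous probability transition kernel on a finite nonempty alphabet G and let φ_P be its update rule. Then for every history w and every symbol g ∈ G, the Lebesgue measure of the set { u ∈ [0,1) : φ_P(u, w) = g } equals P(g|w); in particular, if U is uniformly distributed on [0,1), then φ_P(U, w) has distribution P(·|w). -/

import Mathlib

/-!
For a fixed history `w`, the intervals `[α_k(g|w), β_k(g|w))` are laid out without overlap in the
lexicographic order of `(k, g)`: level `k` fills `[A_{k-1}, A_k)` and inside it the symbols take
consecutive pieces of lengths `a_k(g) - a_{k-1}(g)`. Hence the set where `φ_P(·, w) = g` is the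
disjoint union over `k` of the intervals of `g`, whose lengths telescope to `lim_k a_k(g|w_{-k:-1})`,
and this limit is `P(g|w)` by continuity of `P`.
-/

open Finset Filter

variable {G : Type*}

/-- The ball of all histories admitting `s` as a suffix.
A history is `w : ℕ → G`, index `i` encoding the symbol `w_{-(i+1)}` (index 0 = most recent).
A word `s : List G` encodes `(s_{-n},…,s_{-1})` with list index `i` = symbol `s_{-(i+1)}`. -/
def tree (s : List G) : Set (ℕ → G) := {w | ∀ i : Fin s.length, w i = s.get i}

/-- The word `w_{-k:-1}` formed by the last `k` symbols of the history `w`. -/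
def word (w : ℕ → G) (k : ℕ) : List G := List.ofFn fun i : Fin k => w i

/-- A probability transition kernel on `G`. -/
def IsKernel [Fintype G] (P : (ℕ → G) → G → ℝ) : Prop :=
  ∀ w, (∀ g, 0 ≤ P w g) ∧ ∑ g, P w g = 1

/-- Total variation distance between distributions on a finite alphabet. -/
noncomputable def tvDist [Fintype G] (p q : G → ℝ) : ℝ := (1 / 2) * ∑ a, |p a - q a|

/-- Oscillation `η_P(s)` of the kernel `P` on the ball `tree s`. -/
noncomputable def eta [Fintype G] (P : (ℕ → G) → G → ℝ) (s : List G) : ℝ :=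
  ⨆ w : tree s, ⨆ z : tree s, tvDist (P w) (P z)

/-- Coupling coefficient `a_{|s|}(g|s)`. -/
noncomputable def aCoef (P : (ℕ → G) → G → ℝ) (g : G) (s : List G) : ℝ :=
  ⨅ w : tree s, P w g

/-- Coupling coefficient `A_{|s|}(s)`. -/
noncomputable def ACoef [Fintype G] (P : (ℕ → G) → G → ℝ) (s : List G) : ℝ :=
  ∑ g, aCoef P g s

/-- `A_k^- = inf { A_k(s) : |s| = k }`. -/
noncomputable def Aminus [Fintype G] (P : (ℕ → G) → G → ℝ) (k : ℕ) : ℝ :=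
  ⨅ s : {s : List G // s.length = k}, ACoef P s.1

/-- Continuity of the kernel: continuity from the product topology (G discrete) to
the total variation distance. -/
def KernelContinuous [Fintype G] (P : (ℕ → G) → G → ℝ) : Prop :=
  ∀ w : ℕ → G, ∀ ε > 0, ∃ k : ℕ, ∀ z : ℕ → G, (∀ i < k, z i = w i) → tvDist (P w) (P z) < ε

/-- `α_k(g | w_{-k:-1})` with the convention `A_{-1}(ε) = a_{-1}(·|ε) = 0`. -/
noncomputable def alphaCoef [Fintype G] [LinearOrder G] (P : (ℕ → G) → G → ℝ)
    (k : ℕ) (g : G) (w : ℕ → G) : ℝ :=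
  (if k = 0 then 0 else ACoef P (word w (k - 1))) +
    ∑ h ∈ univ.filter (fun h => h < g),
      (aCoef P h (word w k) - if k = 0 then 0 else aCoef P h (word w (k - 1)))

/-- `β_k(g | w_{-k:-1})` with the convention `A_{-1}(ε) = a_{-1}(·|ε) = 0`. -/
noncomputable def betaCoef [Fintype G] [LinearOrder G] (P : (ℕ → G) → G → ℝ)
    (k : ℕ) (g : G) (w : ℕ → G) : ℝ :=
  (if k = 0 then 0 else ACoef P (word w (k - 1))) +
    ∑ h ∈ univ.filter (fun h => h ≤ g),
      (aCoef P h (word w k) - if k = 0 then 0 else aCoef P h (word w (k - 1)))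

/-- `φ` is the update rule of `P`: for every `u ∈ [0,1)` and history `w`, `φ u w` is the
(unique) symbol `g` such that `α_k(g|w_{-k:-1}) ≤ u < β_k(g|w_{-k:-1})` for some `k`. -/
def IsUpdateRule [Fintype G] [LinearOrder G] (P : (ℕ → G) → G → ℝ)
    (φ : ℝ → (ℕ → G) → G) : Prop :=
  ∀ u ∈ Set.Ico (0 : ℝ) 1, ∀ w : ℕ → G, ∃ k : ℕ,
    alphaCoef P k (φ u w) w ≤ u ∧ u < betaCoef P k (φ u w) w

open Topology Function

lemma mem_tree_word_iff {w z : ℕ → G} {k : ℕ} : z ∈ tree (word w k) ↔ ∀ i < k, z i = w i := by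
  simp only [tree, word, Set.mem_ofPred_eq, List.get_ofFn]
  constructor
  · intro h i hi
    simpa using h ⟨i, by simpa using hi⟩
  · intro h i
    exact h _ (by simpa using i.2)

lemma mem_tree_word_self (w : ℕ → G) (k : ℕ) : w ∈ tree (word w k) :=
  mem_tree_word_iff.2 fun _ _ => rfl

lemma Monotone.hasSum_sub {f : ℕ → ℝ} (hf : Monotone f) {l : ℝ} (h : Tendsto f atTop (𝓝 l)) :
    HasSum (fun n => f (n + 1) - f n) (l - f 0) := by
  rw [hasSum_iff_tendsto_nat_of_nonneg (fun n => sub_nonneg.2 (hf n.le_succ))]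
  simpa only [Finset.sum_range_sub] using h.sub_const (f 0)

lemma pairwise_disjoint_Ico_of_le {ι α : Type*} [LinearOrder ι] [Preorder α] {a b : ι → α}
    (h : ∀ i j, i < j → b i ≤ a j) : Pairwise (Disjoint on fun i => Set.Ico (a i) (b i)) := by
  intro i j hij
  rw [Function.onFun, Set.disjoint_left]
  rintro u ⟨hai, hbi⟩ ⟨haj, hbj⟩
  rcases hij.lt_or_gt with hlt | hlt
  · exact (hbi.trans_le ((h i j hlt).trans haj)).false
  · exact (hbj.trans_le ((h j i hlt).trans hai)).false

section PartialSums

variable {ι M : Type*} [Fintype ι] [LinearOrder ι]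

lemma sum_filter_le_eq_sum_filter_lt_add [AddCommMonoid M] (δ : ι → M) (g : ι) :
    ∑ h ∈ univ.filter (· ≤ g), δ h = ∑ h ∈ univ.filter (· < g), δ h + δ g := by
  have hfilter : univ.filter (· ≤ g) = insert g (univ.filter (· < g)) := by
    ext h
    simp [le_iff_lt_or_eq, or_comm]
  rw [hfilter, sum_insert (by simp), add_comm]

lemma sum_filter_le_le_sum_filter_lt [AddCommMonoid M] [PartialOrder M] [IsOrderedAddMonoid M]
    {δ : ι → M} (hδ : 0 ≤ δ) {g g' : ι} (hg : g < g') :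
    ∑ h ∈ univ.filter (· ≤ g), δ h ≤ ∑ h ∈ univ.filter (· < g'), δ h :=
  Finset.sum_le_sum_of_subset_of_nonneg
    (fun h hh => by simp only [mem_filter, mem_univ, true_and] at hh ⊢; exact hh.trans_lt hg)
    (fun h _ _ => hδ h)

end PartialSums

lemma abs_sub_le_two_mul_tvDist [Fintype G] (p q : G → ℝ) (g : G) :
    |p g - q g| ≤ 2 * tvDist p q :=
  calc |p g - q g| ≤ ∑ a, |p a - q a| :=
        Finset.single_le_sum (f := fun a => |p a - q a|) (fun a _ => abs_nonneg _) (mem_univ g)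
    _ = 2 * tvDist p q := by rw [tvDist]; ring

section Coefficients

variable [Fintype G] {P : (ℕ → G) → G → ℝ}

lemma aCoef_le_of_mem_tree (hP : IsKernel P) {z : ℕ → G} {s : List G} (hz : z ∈ tree s)
    (g : G) : aCoef P g s ≤ P z g :=
  ciInf_le ⟨0, by rintro x ⟨z', rfl⟩; exact (hP z'.1).1 g⟩ (⟨z, hz⟩ : tree s)

lemma aCoef_nonneg (hP : IsKernel P) (g : G) (s : List G) : 0 ≤ aCoef P g s :=
  Real.iInf_nonneg fun z => (hP z.1).1 g

lemma aCoef_word_mono (hP : IsKernel P) (w : ℕ → G) (g : G) :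
    Monotone fun k => aCoef P g (word w k) := by
  intro k n hkn
  have : Nonempty (tree (word w n)) := ⟨⟨w, mem_tree_word_self w n⟩⟩
  exact le_ciInf fun z => aCoef_le_of_mem_tree hP (mem_tree_word_iff.2 fun i hi =>
    mem_tree_word_iff.1 z.2 i (hi.trans_le hkn)) g

lemma tendsto_aCoef_word (hP : IsKernel P) (hc : KernelContinuous P) (w : ℕ → G) (g : G) :
    Tendsto (fun k => aCoef P g (word w k)) atTop (𝓝 (P w g)) := by
  rw [Metric.tendsto_atTop]
  intro ε hε
  obtain ⟨k, hk⟩ := hc w (ε / 4) (by positivity)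
  refine ⟨k, fun n hn => ?_⟩
  have hle : aCoef P g (word w n) ≤ P w g := aCoef_le_of_mem_tree hP (mem_tree_word_self w n) g
  have hge : P w g - ε / 2 ≤ aCoef P g (word w n) := by
    have : Nonempty (tree (word w n)) := ⟨⟨w, mem_tree_word_self w n⟩⟩
    refine le_ciInf fun z => ?_
    have htv := hk z.1 fun i hi => mem_tree_word_iff.1 z.2 i (hi.trans_le hn)
    linarith [abs_sub_le_two_mul_tvDist (P w) (P z.1) g, le_abs_self (P w g - P z.1 g)]
  rw [Real.dist_eq, abs_sub_lt_iff]
  constructor <;> linarith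

end Coefficients

/-- `aSeq P w g n = a_{n-1}(g|w_{-n+1:-1})`; the shift makes the convention `a_{-1} = 0` the
value at `n = 0`. -/
noncomputable def aSeq (P : (ℕ → G) → G → ℝ) (w : ℕ → G) (g : G) (n : ℕ) : ℝ :=
  if n = 0 then 0 else aCoef P g (word w (n - 1))

@[simp] lemma aSeq_zero (P : (ℕ → G) → G → ℝ) (w : ℕ → G) (g : G) : aSeq P w g 0 = 0 := rfl

@[simp] lemma aSeq_succ (P : (ℕ → G) → G → ℝ) (w : ℕ → G) (g : G) (k : ℕ) :
    aSeq P w g (k + 1) = aCoef P g (word w k) := rfl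

section Sequence

variable [Fintype G] {P : (ℕ → G) → G → ℝ}

lemma aSeq_mono (hP : IsKernel P) (w : ℕ → G) (g : G) : Monotone (aSeq P w g) := by
  refine monotone_nat_of_le_succ fun n => ?_
  cases n with
  | zero => simpa using aCoef_nonneg hP g (word w 0)
  | succ k => simpa using aCoef_word_mono hP w g k.le_succ

lemma aSeq_nonneg (hP : IsKernel P) (w : ℕ → G) (g : G) (n : ℕ) : 0 ≤ aSeq P w g n :=
  aSeq_zero P w g ▸ aSeq_mono hP w g n.zero_le

lemma sum_aSeq_le_one (hP : IsKernel P) (w : ℕ → G) (n : ℕ) : ∑ g, aSeq P w g n ≤ 1 := by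
  cases n with
  | zero => simp
  | succ k =>
    calc ∑ g, aSeq P w g (k + 1) ≤ ∑ g, P w g := Finset.sum_le_sum fun g _ =>
          aCoef_le_of_mem_tree hP (mem_tree_word_self w k) g
      _ = 1 := (hP w).2

lemma tendsto_aSeq (hP : IsKernel P) (hc : KernelContinuous P) (w : ℕ → G) (g : G) :
    Tendsto (aSeq P w g) atTop (𝓝 (P w g)) :=
  (tendsto_add_atTop_iff_nat 1).1 (tendsto_aCoef_word hP hc w g)

lemma hasSum_aSeq_sub (hP : IsKernel P) (hc : KernelContinuous P) (w : ℕ → G) (g : G) :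
    HasSum (fun k => aSeq P w g (k + 1) - aSeq P w g k) (P w g) := by
  simpa using (aSeq_mono hP w g).hasSum_sub (tendsto_aSeq hP hc w g)

end Sequence

section Intervals

variable [Fintype G] [LinearOrder G] {P : (ℕ → G) → G → ℝ}

lemma alphaCoef_eq_sum_aSeq (k : ℕ) (g : G) (w : ℕ → G) :
    alphaCoef P k g w = ∑ h, aSeq P w h k +
      ∑ h ∈ univ.filter (· < g), (aSeq P w h (k + 1) - aSeq P w h k) := by
  cases k <;> simp [alphaCoef, aSeq, ACoef]

lemma betaCoef_eq_sum_aSeq (k : ℕ) (g : G) (w : ℕ → G) :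
    betaCoef P k g w = ∑ h, aSeq P w h k +
      ∑ h ∈ univ.filter (· ≤ g), (aSeq P w h (k + 1) - aSeq P w h k) := by
  cases k <;> simp [betaCoef, aSeq, ACoef]

lemma betaCoef_sub_alphaCoef (k : ℕ) (g : G) (w : ℕ → G) :
    betaCoef P k g w - alphaCoef P k g w = aSeq P w g (k + 1) - aSeq P w g k := by
  rw [alphaCoef_eq_sum_aSeq, betaCoef_eq_sum_aSeq, sum_filter_le_eq_sum_filter_lt_add]
  ring

variable (hP : IsKernel P) (w : ℕ → G)
include hP

lemma sum_aSeq_le_alphaCoef (k : ℕ) (g : G) : ∑ h, aSeq P w h k ≤ alphaCoef P k g w := by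
  rw [alphaCoef_eq_sum_aSeq]
  exact le_add_of_nonneg_right
    (Finset.sum_nonneg fun h _ => sub_nonneg.2 (aSeq_mono hP w h k.le_succ))

lemma betaCoef_le_sum_aSeq_succ (k : ℕ) (g : G) :
    betaCoef P k g w ≤ ∑ h, aSeq P w h (k + 1) := by
  have hsplit : ∑ h, aSeq P w h (k + 1) =
      ∑ h, aSeq P w h k + ∑ h, (aSeq P w h (k + 1) - aSeq P w h k) := by
    rw [Finset.sum_sub_distrib]; ring
  rw [betaCoef_eq_sum_aSeq, hsplit]
  exact add_le_add le_rfl (Finset.sum_le_sum_of_subset_of_nonneg (filter_subset _ _)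
    fun h _ _ => sub_nonneg.2 (aSeq_mono hP w h k.le_succ))

lemma betaCoef_le_alphaCoef_of_lt {k k' : ℕ} {g g' : G} (h : toLex (k, g) < toLex (k', g')) :
    betaCoef P k g w ≤ alphaCoef P k' g' w := by
  rw [Prod.Lex.toLex_lt_toLex] at h
  dsimp only at h
  rcases h with hk | ⟨rfl, hg⟩
  · calc betaCoef P k g w ≤ ∑ h, aSeq P w h (k + 1) := betaCoef_le_sum_aSeq_succ hP w k g
      _ ≤ ∑ h, aSeq P w h k' := Finset.sum_le_sum fun h _ => aSeq_mono hP w h hk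
      _ ≤ alphaCoef P k' g' w := sum_aSeq_le_alphaCoef hP w k' g'
  · rw [alphaCoef_eq_sum_aSeq, betaCoef_eq_sum_aSeq]
    exact add_le_add le_rfl (sum_filter_le_le_sum_filter_lt
      (fun h => sub_nonneg.2 (aSeq_mono hP w h k.le_succ)) hg)

lemma pairwise_disjoint_Ico_alphaCoef_betaCoef :
    Pairwise (Disjoint on fun i : ℕ ×ₗ G =>
      Set.Ico (alphaCoef P (ofLex i).1 (ofLex i).2 w) (betaCoef P (ofLex i).1 (ofLex i).2 w)) :=
  pairwise_disjoint_Ico_of_le fun _ _ hij => betaCoef_le_alphaCoef_of_lt hP w hij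

lemma Ico_alphaCoef_betaCoef_subset (k : ℕ) (g : G) :
    Set.Ico (alphaCoef P k g w) (betaCoef P k g w) ⊆ Set.Ico 0 1 :=
  Set.Ico_subset_Ico
    ((Finset.sum_nonneg fun h _ => aSeq_nonneg hP w h k).trans (sum_aSeq_le_alphaCoef hP w k g))
    ((betaCoef_le_sum_aSeq_succ hP w k g).trans (sum_aSeq_le_one hP w (k + 1)))

lemma setOf_updateRule_eq_iUnion {φ : ℝ → (ℕ → G) → G} (hφ : IsUpdateRule P φ) (g : G) :
    {u : ℝ | u ∈ Set.Ico (0 : ℝ) 1 ∧ φ u w = g} =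
      ⋃ k, Set.Ico (alphaCoef P k g w) (betaCoef P k g w) := by
  ext u
  simp only [Set.mem_ofPred_eq, Set.mem_iUnion]
  constructor
  · rintro ⟨hu, rfl⟩
    exact hφ u hu w
  · rintro ⟨k, hk⟩
    have hu := Ico_alphaCoef_betaCoef_subset hP w k g hk
    obtain ⟨k', hk'⟩ := hφ u hu w
    refine ⟨hu, ?_⟩
    by_contra hne
    exact Set.disjoint_left.1 (pairwise_disjoint_Ico_alphaCoef_betaCoef hP w
      (i := toLex (k', φ u w)) (j := toLex (k, g)) (by simp [hne])) hk' hk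

end Intervals

open MeasureTheory in
theorem stmt_3_general [Fintype G] [LinearOrder G] (P : (ℕ → G) → G → ℝ)
    (hP : IsKernel P) (hc : KernelContinuous P)
    (φ : ℝ → (ℕ → G) → G) (hφ : IsUpdateRule P φ) (w : ℕ → G) (g : G) :
    volume {u : ℝ | u ∈ Set.Ico (0 : ℝ) 1 ∧ φ u w = g} = ENNReal.ofReal (P w g) := by
  have hdisj : Pairwise (Disjoint on fun k => Set.Ico (alphaCoef P k g w) (betaCoef P k g w)) :=
    fun k k' hkk' => pairwise_disjoint_Ico_alphaCoef_betaCoef hP w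
      (i := toLex (k, g)) (j := toLex (k', g)) (by simpa using hkk')
  have hsum := hasSum_aSeq_sub hP hc w g
  rw [setOf_updateRule_eq_iUnion hP w hφ, measure_iUnion hdisj fun _ => measurableSet_Ico,
    ← hsum.tsum_eq, ENNReal.ofReal_tsum_of_nonneg
      (fun k => sub_nonneg.2 (aSeq_mono hP w g k.le_succ)) hsum.summable]
  simp only [Real.volume_Ico, betaCoef_sub_alphaCoef]

open MeasureTheory in
/-- The update rule `φ_P` of a continuous kernel `P` satisfies: for every history `w` and
every symbol `g`, the Lebesgue measure of `{u ∈ [0,1) : φ_P(u,w) = g}` equals `P(g|w)`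
(so if `U` is uniform on `[0,1)`, then `φ_P(U,w)` has distribution `P(·|w)`). -/
theorem stmt_3 [Fintype G] [Nonempty G] [LinearOrder G] (P : (ℕ → G) → G → ℝ)
    (hP : IsKernel P) (hc : KernelContinuous P)
    (φ : ℝ → (ℕ → G) → G) (hφ : IsUpdateRule P φ) (w : ℕ → G) (g : G) :
    volume {u : ℝ | u ∈ Set.Ico (0 : ℝ) 1 ∧ φ u w = g} = ENNReal.ofReal (P w g) :=
  stmt_3_general P hP hc φ hφ w g
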